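/- Let p be a prime number and let g and b be units of the finite field ZMod p. Suppose there exist natural numbers α and β with g^α = b^β in (ZMod p)ˣ, and suppose β' is a natural number with β·β' ≡ 1 (mod p−1). Then g^(α·β') = b in (ZMod p)ˣ. (This is the correctness of the output x = α·β⁻¹ mod (p−1) of the double index calculus algorithm; note that it does not require g to be a multiplication generator.) -/
import Mathlib

theorem stmt_0 (p : ℕ) (hp : p.Prime) (g b : (ZMod p)ˣ)
    (α β β' : ℕ) (h : g ^ α = b ^ β) (hβ : β * β' ≡ 1 [MOD p - 1]) :
    g ^ (α * β') = b := by
  haveI : Fact p.Prime := ⟨hp⟩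
  have hcard : Fintype.card (ZMod p)ˣ = p - 1 := by simp [ZMod.card_units_eq_totient, Nat.totient_prime hp]
  have hdvd : orderOf b ∣ p - 1 := hcard ▸ orderOf_dvd_card
  calc g ^ (α * β') = (g ^ α) ^ β' := pow_mul g α β'
    _ = b ^ (β * β') := by rw [h, pow_mul]
    _ = b ^ 1 := (pow_eq_pow_iff_modEq).mpr (hβ.of_dvd hdvd)
    _ = b := pow_one b
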